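/- The natural preorder of the period semiring is the pointwise natural preorder of K under timeslices: for all coalesced temporal K-elements k and k', k ≼_T k' if and only if τ_T(k) ≼_K τ_T(k') for every time point T. -/

import Mathlib

open scoped Classical

namespace TemporalK

variable {K : Type*}

/-- An interval over the time domain `{0, ..., N-1}`: a pair `(b, e)` with `b < e ≤ N`. -/
abbrev TInterval (N : ℕ) := {I : Fin (N + 1) × Fin (N + 1) // I.1 < I.2}

/-- A temporal `K`-element: a function assigning to each interval an element of `K`. -/
abbrev TempEl (N : ℕ) (K : Type*) := TInterval N → K

/-- The interval `I = (b, e)` contains the time point `T` iff `b ≤ T < e`. -/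
def Contains {N : ℕ} (I : TInterval N) (T : ℕ) : Prop :=
  (I.val.1 : ℕ) ≤ T ∧ T < (I.val.2 : ℕ)

/-- The timeslice of `𝒯` at time point `T`: the sum of `𝒯 I` over all intervals `I`
containing `T`. -/
noncomputable def slice {N : ℕ} [CommSemiring K] (𝒯 : TempEl N K) (T : ℕ) : K :=
  ∑ I ∈ Finset.univ.filter (fun I : TInterval N => Contains I T), 𝒯 I

/-- `T` is an (annotation) changepoint of `𝒯` iff `T = 0` or the timeslices at `T - 1`
and `T` differ. -/
def Changepoint {N : ℕ} [CommSemiring K] (𝒯 : TempEl N K) (T : ℕ) : Prop :=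
  T = 0 ∨ slice 𝒯 (T - 1) ≠ slice 𝒯 T

/-- `I = (b, e)` is a changepoint interval of `𝒯` iff `b` is a changepoint, `e` is a
changepoint or equals `N`, and no time point strictly between `b` and `e` is a changepoint. -/
def CPInterval {N : ℕ} [CommSemiring K] (𝒯 : TempEl N K) (I : TInterval N) : Prop :=
  Changepoint 𝒯 (I.val.1 : ℕ) ∧
    (Changepoint 𝒯 (I.val.2 : ℕ) ∨ (I.val.2 : ℕ) = N) ∧
    ∀ T : ℕ, (I.val.1 : ℕ) < T → T < (I.val.2 : ℕ) → ¬ Changepoint 𝒯 T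

/-- `K`-coalescing: maps changepoint intervals `(b, e)` to the timeslice at `b` and all
other intervals to `0`. -/
noncomputable def coal {N : ℕ} [CommSemiring K] (𝒯 : TempEl N K) : TempEl N K :=
  fun I => if CPInterval 𝒯 I then slice 𝒯 (I.val.1 : ℕ) else 0

/-- Snapshot equivalence: equal timeslices at every time point. -/
def SnapEq {N : ℕ} [CommSemiring K] (k k' : TempEl N K) : Prop :=
  ∀ T : ℕ, T < N → slice k T = slice k' T

/-- A temporal `K`-element is coalesced iff it is the `K`-coalescing of some
temporal `K`-element. -/
def Coalesced {N : ℕ} [CommSemiring K] (k : TempEl N K) : Prop :=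
  ∃ 𝒯 : TempEl N K, k = coal 𝒯

/-- Pointwise addition of temporal `K`-elements. -/
def padd {N : ℕ} [CommSemiring K] (k k' : TempEl N K) : TempEl N K :=
  fun I => k I + k' I

/-- Pointwise multiplication of temporal `K`-elements:
`(k ·_P k')(I) = Σ k(I')·k'(I'')` over all pairs `(I', I'')` whose intersection is
nonempty and equals `I`. -/
noncomputable def pmul {N : ℕ} [CommSemiring K] (k k' : TempEl N K) : TempEl N K :=
  fun I =>
    ∑ p ∈ Finset.univ.filter (fun p : TInterval N × TInterval N =>
        max (p.1.val.1 : ℕ) (p.2.val.1 : ℕ) < min (p.1.val.2 : ℕ) (p.2.val.2 : ℕ) ∧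
        (I.val.1 : ℕ) = max (p.1.val.1 : ℕ) (p.2.val.1 : ℕ) ∧
        (I.val.2 : ℕ) = min (p.1.val.2 : ℕ) (p.2.val.2 : ℕ)),
      k p.1 * k' p.2

/-- Addition of the period semiring: coalesced pointwise addition. -/
noncomputable def tadd {N : ℕ} [CommSemiring K] (k k' : TempEl N K) : TempEl N K :=
  coal (padd k k')

/-- Multiplication of the period semiring: coalesced pointwise multiplication. -/
noncomputable def tmul {N : ℕ} [CommSemiring K] (k k' : TempEl N K) : TempEl N K :=
  coal (pmul k k')

/-- The zero of the period semiring: maps every interval to `0`. -/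
def zeroT (N : ℕ) (K : Type*) [CommSemiring K] : TempEl N K := fun _ => 0

/-- The one of the period semiring: maps the interval `(0, N)` to `1` and every other
interval to `0`. -/
def oneT (N : ℕ) (K : Type*) [CommSemiring K] : TempEl N K :=
  fun I => if (I.val.1 : ℕ) = 0 ∧ (I.val.2 : ℕ) = N then 1 else 0

/-- Encoding of an annotation history `f : time points → K` as a coalesced temporal
`K`-element: coalesce the element assigning `f T` to each singleton interval `(T, T+1)`. -/
noncomputable def enc {N : ℕ} [CommSemiring K] (f : Fin N → K) : TempEl N K :=
  coal (fun I =>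
    if h : (I.val.2 : ℕ) = (I.val.1 : ℕ) + 1 then
      f ⟨(I.val.1 : ℕ), by have := I.val.2.isLt; omega⟩
    else 0)

/-- The natural preorder of the semiring `K`. -/
def nle [CommSemiring K] (a b : K) : Prop := ∃ c, a + c = b

/-- The natural preorder of the period semiring (on coalesced temporal `K`-elements). -/
def tle {N : ℕ} [CommSemiring K] (k k' : TempEl N K) : Prop :=
  ∃ k'' : TempEl N K, Coalesced k'' ∧ tadd k k'' = k'

/-- The pointwise monus: assigns `τ_T(k) −_K τ_T(k')` to each singleton interval
`(T, T+1)` and `0` to every non-singleton interval. -/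
noncomputable def pmonus {N : ℕ} [CommSemiring K] (monus : K → K → K)
    (k k' : TempEl N K) : TempEl N K :=
  fun I =>
    if (I.val.2 : ℕ) = (I.val.1 : ℕ) + 1 then
      monus (slice k (I.val.1 : ℕ)) (slice k' (I.val.1 : ℕ))
    else 0

/-- The monus of the period semiring: coalesced pointwise monus. -/
noncomputable def tmonus {N : ℕ} [CommSemiring K] (monus : K → K → K)
    (k k' : TempEl N K) : TempEl N K :=
  coal (pmonus monus k k')

end TemporalK

open TemporalK

/-!
Coalescing preserves timeslices, and the coalesce of `𝒯` depends only on the timeslices of `𝒯`;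
hence a coalesced element is determined by its timeslices and `τ_T(k +_T k'') = τ_T(k) + τ_T(k'')`.
A witness `k''` of `k ≼_T k'` therefore gives the witnesses `τ_T(k'')` of the pointwise
preorder. Conversely, pointwise witnesses `c_T` are placed on the singleton intervals `(T, T+1)`
and coalesced (this is `enc c`), which yields a coalesced element with timeslices `c_T`.
-/

namespace TemporalK

variable {K : Type*} [CommSemiring K] {N : ℕ}

theorem slice_padd (k k' : TempEl N K) (T : ℕ) :
    slice (padd k k') T = slice k T + slice k' T := by
  simp only [slice, padd, Finset.sum_add_distrib]

theorem slice_eq_of_forall_not_changepoint (𝒯 : TempEl N K) {b T : ℕ} (hbT : b ≤ T)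
    (h : ∀ S, b < S → S ≤ T → ¬ Changepoint 𝒯 S) : slice 𝒯 T = slice 𝒯 b := by
  induction T, hbT using Nat.le_induction with
  | base => rfl
  | succ T hbT ih =>
    have hT := h (T + 1) (by omega) le_rfl
    simp only [Changepoint, add_tsub_cancel_right, not_or, ne_eq, not_not] at hT
    rw [← hT.2, ih fun S h₁ h₂ => h S h₁ (by omega)]

theorem CPInterval.eq_of_contains {𝒯 : TempEl N K} {I J : TInterval N} {T : ℕ}
    (hI : CPInterval 𝒯 I) (hJ : CPInterval 𝒯 J) (hIT : Contains I T) (hJT : Contains J T) :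
    I = J := by
  obtain ⟨⟨b, e⟩, hbe⟩ := I
  obtain ⟨⟨b', e'⟩, hbe'⟩ := J
  obtain ⟨hb, he, hbe_free⟩ := hI
  obtain ⟨hb', he', hbe_free'⟩ := hJ
  simp only [Contains] at hIT hJT hb hb' he he' hbe_free hbe_free'
  have heN := e.is_le
  have heN' := e'.is_le
  have hbb' : (b : ℕ) = b' := by
    by_contra hne
    rcases Nat.lt_or_gt_of_ne hne with h | h
    · exact hbe_free _ h (by omega) hb'
    · exact hbe_free' _ h (by omega) hb
  have hee' : (e : ℕ) = e' := by
    by_contra hne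
    rcases Nat.lt_or_gt_of_ne hne with h | h
    · exact he.elim (hbe_free' _ (by omega) h) (by omega)
    · exact he'.elim (hbe_free _ (by omega) h) (by omega)
  exact Subtype.ext (Prod.ext (Fin.ext hbb') (Fin.ext hee'))

/-- The changepoint interval around `T` runs from the last changepoint `≤ T` to the first
changepoint `> T` (or to `N`). -/
theorem exists_cpInterval_contains (𝒯 : TempEl N K) {T : ℕ} (hT : T < N) :
    ∃ I : TInterval N, CPInterval 𝒯 I ∧ Contains I T ∧ slice 𝒯 T = slice 𝒯 I.val.1 := by
  set b := Nat.findGreatest (Changepoint 𝒯) T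
  have hb : Changepoint 𝒯 b := Nat.findGreatest_spec (Nat.zero_le T) (Or.inl rfl)
  have hbT : b ≤ T := Nat.findGreatest_le T
  have hb_free : ∀ S, b < S → S ≤ T → ¬ Changepoint 𝒯 S :=
    fun _ h₁ h₂ => Nat.findGreatest_is_greatest h₁ h₂
  have hEx : ∃ S, T < S ∧ (Changepoint 𝒯 S ∨ S = N) := ⟨N, hT, Or.inr rfl⟩
  set e := Nat.find hEx
  obtain ⟨hTe, he⟩ := Nat.find_spec hEx
  have heN : e ≤ N := Nat.find_min' hEx ⟨hT, Or.inr rfl⟩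
  refine ⟨⟨(⟨b, by omega⟩, ⟨e, by omega⟩), Fin.mk_lt_mk.2 (by omega)⟩,
    ⟨hb, he, fun S h₁ h₂ hS => ?_⟩, ⟨hbT, hTe⟩, slice_eq_of_forall_not_changepoint 𝒯 hbT hb_free⟩
  rcases le_or_gt S T with h | h
  · exact hb_free S h₁ h hS
  · exact Nat.find_min hEx h₂ ⟨h, Or.inl hS⟩

theorem slice_coal (𝒯 : TempEl N K) {T : ℕ} (hT : T < N) : slice (coal 𝒯) T = slice 𝒯 T := by
  obtain ⟨I, hI, hIT, hslice⟩ := exists_cpInterval_contains 𝒯 hT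
  rw [slice, Finset.sum_eq_single_of_mem I (by simpa using hIT), coal, if_pos hI, hslice]
  intro J hJT hJI
  rw [coal, if_neg fun hJ => hJI (hJ.eq_of_contains hI (by simpa using hJT) hIT)]

theorem snapEq_coal (𝒯 : TempEl N K) : SnapEq (coal 𝒯) 𝒯 :=
  fun _ hT => slice_coal 𝒯 hT

theorem SnapEq.changepoint_iff {𝒯 𝒯' : TempEl N K} (h : SnapEq 𝒯 𝒯') {S : ℕ} (hS : S < N) :
    Changepoint 𝒯 S ↔ Changepoint 𝒯' S := by
  rw [Changepoint, Changepoint, h S hS, h (S - 1) (by omega)]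

theorem SnapEq.cpInterval_iff {𝒯 𝒯' : TempEl N K} (h : SnapEq 𝒯 𝒯') (I : TInterval N) :
    CPInterval 𝒯 I ↔ CPInterval 𝒯' I := by
  have hbe : (I.val.1 : ℕ) < I.val.2 := I.property
  have heN := I.val.2.is_le
  have he : Changepoint 𝒯 I.val.2 ∨ (I.val.2 : ℕ) = N ↔
      Changepoint 𝒯' I.val.2 ∨ (I.val.2 : ℕ) = N := by
    rcases heN.lt_or_eq with heN | heN
    · rw [h.changepoint_iff heN]
    · simp only [heN, or_true]
  refine and_congr (h.changepoint_iff (by omega)) (and_congr he ?_)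
  exact forall_congr' fun S => imp_congr_right fun h₁ => imp_congr_right fun h₂ =>
    not_congr (h.changepoint_iff (by omega))

theorem SnapEq.coal_eq {𝒯 𝒯' : TempEl N K} (h : SnapEq 𝒯 𝒯') : coal 𝒯 = coal 𝒯' := by
  funext I
  simp only [coal, h.cpInterval_iff I]
  split_ifs with hI
  · exact h _ (by have := I.property; have := I.val.2.is_le; omega)
  · rfl

theorem Coalesced.coal_eq {k : TempEl N K} (hk : Coalesced k) : coal k = k := by
  obtain ⟨𝒯, rfl⟩ := hk
  exact (snapEq_coal 𝒯).coal_eq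

theorem slice_tadd (k k'' : TempEl N K) {T : ℕ} (hT : T < N) :
    slice (tadd k k'') T = slice k T + slice k'' T := by
  rw [tadd, slice_coal _ hT, slice_padd]

theorem tadd_eq_of_slice_add {k k' k'' : TempEl N K} (hk' : Coalesced k')
    (h : ∀ T, T < N → slice k T + slice k'' T = slice k' T) : tadd k k'' = k' := by
  rw [← hk'.coal_eq]
  exact SnapEq.coal_eq fun T hT => by rw [slice_padd, h T hT]

theorem coalesced_enc (f : Fin N → K) : Coalesced (enc f) :=
  ⟨_, rfl⟩

theorem slice_enc (f : Fin N → K) {T : ℕ} (hT : T < N) : slice (enc f) T = f ⟨T, hT⟩ := by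
  have hI : ((⟨T, by omega⟩ : Fin (N + 1)) : ℕ) < (⟨T + 1, by omega⟩ : Fin (N + 1)) :=
    Nat.lt_succ_self T
  rw [enc, slice_coal _ hT, slice, Finset.sum_eq_single_of_mem ⟨(_, _), hI⟩
    (Finset.mem_filter.2 ⟨Finset.mem_univ _, le_rfl, Nat.lt_succ_self T⟩)]
  · simp
  · rintro ⟨⟨b, e⟩, hbe⟩ hJT hJI
    obtain ⟨hbT, hTe⟩ := (Finset.mem_filter.1 hJT).2
    refine dif_neg fun he => hJI (Subtype.ext (Prod.ext (Fin.ext ?_) (Fin.ext ?_)))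
    all_goals (simp only at he hbT hTe ⊢; omega)

end TemporalK

theorem tle_iff_pointwise_nle_general {N : ℕ} {K : Type*} [CommSemiring K]
    (k k' : TempEl N K) (hk' : Coalesced k') :
    tle k k' ↔ ∀ T : ℕ, T < N → nle (slice k T) (slice k' T) := by
  constructor
  · rintro ⟨k'', -, rfl⟩ T hT
    exact ⟨slice k'' T, (slice_tadd k k'' hT).symm⟩
  · intro h
    choose c hc using fun T : Fin N => h T T.isLt
    refine ⟨enc c, coalesced_enc c, tadd_eq_of_slice_add hk' fun T hT => ?_⟩
    rw [slice_enc c hT]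
    exact hc ⟨T, hT⟩

theorem tle_iff_pointwise_nle {N : ℕ} (hN : 1 ≤ N) {K : Type*} [CommSemiring K]
    (k k' : TempEl N K) (hk : Coalesced k) (hk' : Coalesced k') :
    tle k k' ↔ ∀ T : ℕ, T < N → nle (slice k T) (slice k' T) :=
  tle_iff_pointwise_nle_general k k' hk'
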